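/- Let (G_H,*) be a special loop with the second Smarandache right inverse property ((x*s)*s^ρ = x for all x in G and s in H). If (U,V,W) is a second right Smarandache autotopism of G_H, then (W, J_ρ V J_ρ, U) is also a second right Smarandache autotopism of G_H, where J_ρ V J_ρ is the map s ↦ ((s^ρ)V)^ρ; that is, the map s ↦ ((s^ρ)V)^ρ is an S-bijection and xW * ((s^ρ)V)^ρ = (x*s)U for all x in G and s in H. -/
import Mathlib


/-- A loop: a binary operation with two-sided identity such that all left and
right translations are bijections. -/
structure SLoop (G : Type*) where
  mul : G → G → G
  one : G
  one_mul : ∀ x, mul one x = x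
  mul_one : ∀ x, mul x one = x
  bij_left : ∀ a, Function.Bijective (fun x => mul a x)
  bij_right : ∀ a, Function.Bijective (fun x => mul x a)

namespace SLoop

variable {G : Type*}

/-- The right inverse `x^ρ`, the unique element with `x * x^ρ = 1`. -/
noncomputable def rinv (L : SLoop G) (x : G) : G :=
  Classical.choose ((L.bij_left x).surjective L.one)

/-- The left inverse `x^λ`, the unique element with `x^λ * x = 1`. -/
noncomputable def linv (L : SLoop G) (x : G) : G :=
  Classical.choose ((L.bij_right x).surjective L.one)

/-- `H` is a subloop: contains `1`, closed under multiplication, and closed under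
the unique solutions of `a * x = b` and `y * a = b` for `a, b ∈ H`. -/
def IsSubloop (L : SLoop G) (H : Set G) : Prop :=
  L.one ∈ H ∧ (∀ a ∈ H, ∀ b ∈ H, L.mul a b ∈ H) ∧
    (∀ a ∈ H, ∀ b ∈ H, ∀ x, L.mul a x = b → x ∈ H) ∧
    (∀ a ∈ H, ∀ b ∈ H, ∀ y, L.mul y a = b → y ∈ H)

/-- The second Smarandache Bol identity: `((x*s)*z)*s = x*((s*z)*s)` for all
`x z : G` and `s ∈ H`. -/
def IsS2Bol (L : SLoop G) (H : Set G) : Prop :=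
  ∀ x z : G, ∀ s ∈ H, L.mul (L.mul (L.mul x s) z) s = L.mul x (L.mul (L.mul s z) s)

/-- Natural powers in a loop: `s^0 = 1`, `s^(n+1) = s^n * s`. -/
def pow (L : SLoop G) (s : G) : ℕ → G
  | 0 => L.one
  | n + 1 => L.mul (L.pow s n) s

/-- A Smarandache bijection: a bijection of `G` mapping `H` onto `H`. -/
def SBij (L : SLoop G) (H : Set G) (A : G → G) : Prop :=
  Function.Bijective A ∧ A '' H = H

end SLoop


section Aux
variable {G : Type*}

lemma mul_rinv (L : SLoop G) (x : G) : L.mul x (L.rinv x) = L.one :=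
  Classical.choose_spec ((L.bij_left x).surjective L.one)

lemma rinv_bij (L : SLoop G) : Function.Bijective L.rinv := by
  constructor
  · intro a b h
    have ha : L.mul a (L.rinv b) = L.one := h ▸ mul_rinv L a
    have hb : L.mul b (L.rinv b) = L.one := mul_rinv L b
    exact (L.bij_right (L.rinv b)).injective (ha.trans hb.symm)
  · intro z
    obtain ⟨x, hx⟩ := (L.bij_right z).surjective L.one
    refine ⟨x, (L.bij_left x).injective ?_⟩
    show L.mul x (L.rinv x) = L.mul x z
    rw [mul_rinv]; exact hx.symm

theorem s2raut_aux {G : Type*} (L : SLoop G) (H : Set G)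
    (hH : L.IsSubloop H)
    (hRIP : ∀ x : G, ∀ s ∈ H, L.mul (L.mul x s) (L.rinv s) = x) :
    (∀ s ∈ H, L.rinv s ∈ H) ∧ (∀ s ∈ H, L.rinv (L.rinv s) = s) := by
  have hmem : ∀ s ∈ H, L.rinv s ∈ H := fun s hs =>
    hH.2.2.1 s hs L.one hH.1 (L.rinv s) (mul_rinv L s)
  refine ⟨hmem, fun s hs => ?_⟩
  have := hRIP s (L.rinv s) (hmem s hs)
  rwa [mul_rinv, L.one_mul] at this

end Aux

/-- If a special loop has the second Smarandache right inverse property and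
`(U,V,W)` is a second right Smarandache autotopism, then
`(W, J_ρ V J_ρ, U)` is also a second right Smarandache autotopism. -/
theorem s2raut_shift {G : Type*} (L : SLoop G) (H : Set G)
    (hH : L.IsSubloop H)
    (hRIP : ∀ x : G, ∀ s ∈ H, L.mul (L.mul x s) (L.rinv s) = x)
    (U V W : G → G) (hU : Function.Bijective U) (hW : Function.Bijective W)
    (hV : L.SBij H V)
    (hAT : ∀ x : G, ∀ s ∈ H, L.mul (U x) (V s) = W (L.mul x s)) :
    L.SBij H (fun s => L.rinv (V (L.rinv s))) ∧
      ∀ x : G, ∀ s ∈ H, L.mul (W x) (L.rinv (V (L.rinv s))) = U (L.mul x s) := by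
  obtain ⟨hmem, hinv⟩ := s2raut_aux L H hH hRIP
  have hVmem : ∀ s ∈ H, V s ∈ H := fun s hs => by
    have := hV.2 ▸ Set.mem_image_of_mem V hs; exact this
  constructor
  · constructor
    · exact (rinv_bij L).comp (hV.1.comp (rinv_bij L))
    · ext y
      constructor
      · rintro ⟨s, hs, rfl⟩
        exact hmem _ (hVmem _ (hmem s hs))
      · intro hy
        have h1 : L.rinv y ∈ H := hmem y hy
        obtain ⟨t, ht, hVt⟩ : L.rinv y ∈ V '' H := hV.2.symm ▸ h1
        refine ⟨L.rinv t, hmem t ht, ?_⟩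
        simp only []
        rw [hinv t ht, hVt, hinv y hy]
  · intro x s hs
    have hsr : L.rinv s ∈ H := hmem s hs
    have hVs : V (L.rinv s) ∈ H := hVmem _ hsr
    have key : L.mul (U (L.mul x s)) (V (L.rinv s)) = W x := by
      rw [hAT (L.mul x s) (L.rinv s) hsr, hRIP x s hs]
    calc L.mul (W x) (L.rinv (V (L.rinv s)))
        = L.mul (L.mul (U (L.mul x s)) (V (L.rinv s))) (L.rinv (V (L.rinv s))) := by rw [key]
      _ = U (L.mul x s) := hRIP _ _ hVs
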